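/- arXiv:2501.03595 — 2 statements merged into one kernel-verified Lean document; each statement's English description precedes it below -/
import Mathlib

section
/- Let N ≥ 2 and let Ω ⊂ ℝ^N be open. Let p, q, r, a₁, a₂ : Ω → ℝ satisfy 1 < p⁻ ≤ p(x) ≤ q(x) ≤ r(x) ≤ r⁺ for all x, a₁, a₂ ≥ 0 with a₁ ≤ A₁ and a₂ ≤ A₂, and r⁺/p⁻ < 1 + 1/N. Then there exist constants C > 0 and 0 < δ < 1/N, depending only on p⁻, r⁺, A₁, A₂, N and the constants c_p, c_q, c_r, c_{a₁}, c_{a₂}, such that for every t ≥ 1 and every x ∈ Ω at which p, q, r, a₁, a₂ are all differentiable with gradient norms bounded by c_p, c_q, c_r, c_{a₁}, c_{a₂} respectively, the map y ↦ 𝒯(y,t) = t^{p(y)} + a₁(y) t^{q(y)} + a₂(y) t^{r(y)} is differentiable at x and its gradient satisfies ‖∇_x 𝒯(x,t)‖ ≤ C · 𝒯(x,t)^{1+δ}. -/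
set_option maxHeartbeats 1000000


open Real Set

theorem multiphase_gradient_estimate {N : ℕ} (hN : 2 ≤ N)
    (Ω : Set (EuclideanSpace ℝ (Fin N))) (hΩo : IsOpen Ω)
    (p q r a₁ a₂ : EuclideanSpace ℝ (Fin N) → ℝ)
    (pm rp A₁ A₂ cp cq cr ca₁ ca₂ : ℝ) (hpm : 1 < pm)
    (hord : ∀ x ∈ Ω, pm ≤ p x ∧ p x ≤ q x ∧ q x ≤ r x ∧ r x ≤ rp)
    (ha₁ : ∀ x ∈ Ω, 0 ≤ a₁ x ∧ a₁ x ≤ A₁)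
    (ha₂ : ∀ x ∈ Ω, 0 ≤ a₂ x ∧ a₂ x ≤ A₂)
    (hratio : rp / pm < 1 + 1 / (N : ℝ))
    (T : EuclideanSpace ℝ (Fin N) → ℝ → ℝ)
    (hT : ∀ x t, T x t = t ^ p x + a₁ x * t ^ q x + a₂ x * t ^ r x) :
    ∃ C > (0 : ℝ), ∃ δ : ℝ, 0 < δ ∧ δ < 1 / (N : ℝ) ∧
      ∀ t ≥ (1 : ℝ), ∀ x ∈ Ω,
        (DifferentiableAt ℝ p x ∧ ‖fderiv ℝ p x‖ ≤ cp) →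
        (DifferentiableAt ℝ q x ∧ ‖fderiv ℝ q x‖ ≤ cq) →
        (DifferentiableAt ℝ r x ∧ ‖fderiv ℝ r x‖ ≤ cr) →
        (DifferentiableAt ℝ a₁ x ∧ ‖fderiv ℝ a₁ x‖ ≤ ca₁) →
        (DifferentiableAt ℝ a₂ x ∧ ‖fderiv ℝ a₂ x‖ ≤ ca₂) →
        DifferentiableAt ℝ (fun y => T y t) x ∧
          ‖fderiv ℝ (fun y => T y t) x‖ ≤ C * T x t ^ (1 + δ) := by
  have hNpos : (0 : ℝ) < (N : ℝ) := by
    have : (0 : ℕ) < N := by omega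
    exact_mod_cast this
  have hNinv : (0 : ℝ) < 1 / (N : ℝ) := by positivity
  have hpm0 : (0 : ℝ) < pm := lt_trans one_pos hpm
  set δ : ℝ := (max (rp / pm - 1) 0 + 1 / (N : ℝ)) / 2 with hδdef
  have hmaxlt : max (rp / pm - 1) 0 < 1 / (N : ℝ) := by
    apply max_lt _ hNinv
    linarith
  have hδpos : 0 < δ := by
    have h0 : (0 : ℝ) ≤ max (rp / pm - 1) 0 := le_max_right _ _
    rw [hδdef]; linarith
  have hδlt : δ < 1 / (N : ℝ) := by
    rw [hδdef]; linarith
  have hδgt : rp / pm - 1 < δ := by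
    have h1 : rp / pm - 1 ≤ max (rp / pm - 1) 0 := le_max_left _ _
    rw [hδdef]; linarith
  set ζ : ℝ := pm * (1 + δ) - rp with hζdef
  have hζpos : 0 < ζ := by
    have h1 : rp / pm < 1 + δ := by linarith
    have h2 : rp < (1 + δ) * pm := (div_lt_iff₀ hpm0).mp h1
    rw [hζdef]; nlinarith
  set K : ℝ := (cp + A₁ * cq + A₂ * cr) / ζ + ca₁ + ca₂ with hKdef
  refine ⟨max K 1, lt_of_lt_of_le one_pos (le_max_right _ _), δ, hδpos, hδlt, ?_⟩
  intro t ht x hx ⟨hpd, hpb⟩ ⟨hqd, hqb⟩ ⟨hrd, hrb⟩ ⟨h1d, h1b⟩ ⟨h2d, h2b⟩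
  have ht0 : (0 : ℝ) < t := lt_of_lt_of_le one_pos ht
  have hL0 : 0 ≤ Real.log t := Real.log_nonneg ht
  obtain ⟨hpx, hpq, hqr, hrx⟩ := hord x hx
  obtain ⟨h10, h1A⟩ := ha₁ x hx
  obtain ⟨h20, h2A⟩ := ha₂ x hx
  have hcp0 : 0 ≤ cp := le_trans (norm_nonneg _) hpb
  have hcq0 : 0 ≤ cq := le_trans (norm_nonneg _) hqb
  have hcr0 : 0 ≤ cr := le_trans (norm_nonneg _) hrb
  have hca₁0 : 0 ≤ ca₁ := le_trans (norm_nonneg _) h1b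
  have hca₂0 : 0 ≤ ca₂ := le_trans (norm_nonneg _) h2b
  have hA₁0 : 0 ≤ A₁ := le_trans h10 h1A
  have hA₂0 : 0 ≤ A₂ := le_trans h20 h2A
  -- the derivative
  set F' : EuclideanSpace ℝ (Fin N) →L[ℝ] ℝ :=
    ((t ^ p x * Real.log t) • fderiv ℝ p x +
      (a₁ x • ((t ^ q x * Real.log t) • fderiv ℝ q x) + (t ^ q x) • fderiv ℝ a₁ x)) +
      (a₂ x • ((t ^ r x * Real.log t) • fderiv ℝ r x) + (t ^ r x) • fderiv ℝ a₂ x)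
    with hF'def
  have hF : HasFDerivAt (fun y => T y t) F' x := by
    have h1 := hpd.hasFDerivAt.const_rpow ht0
    have h2 := h1d.hasFDerivAt.mul (hqd.hasFDerivAt.const_rpow ht0)
    have h3 := h2d.hasFDerivAt.mul (hrd.hasFDerivAt.const_rpow ht0)
    have h := (h1.add h2).add h3
    have heq : (fun y => T y t) =
        fun y => t ^ p y + a₁ y * t ^ q y + a₂ y * t ^ r y := by
      funext y; exact hT y t
    rw [heq, hF'def]
    exact h
  refine ⟨hF.differentiableAt, ?_⟩
  rw [hF.fderiv]
  -- norm bounds on rpow factors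
  have htp0 : (0 : ℝ) ≤ t ^ p x := (Real.rpow_pos_of_pos ht0 _).le
  have htq0 : (0 : ℝ) ≤ t ^ q x := (Real.rpow_pos_of_pos ht0 _).le
  have htr0 : (0 : ℝ) ≤ t ^ r x := (Real.rpow_pos_of_pos ht0 _).le
  have htrp0 : (0 : ℝ) ≤ t ^ rp := (Real.rpow_pos_of_pos ht0 _).le
  have hple : t ^ p x ≤ t ^ rp :=
    Real.rpow_le_rpow_of_exponent_le ht (by linarith)
  have hqle : t ^ q x ≤ t ^ rp :=
    Real.rpow_le_rpow_of_exponent_le ht (by linarith)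
  have hrle : t ^ r x ≤ t ^ rp :=
    Real.rpow_le_rpow_of_exponent_le ht (by linarith)
  have hnorm : ‖F'‖ ≤ (cp + A₁ * cq + A₂ * cr) * (t ^ rp * Real.log t)
      + (ca₁ + ca₂) * t ^ rp := by
    have e1 : ‖(t ^ p x * Real.log t) • fderiv ℝ p x‖
        ≤ t ^ rp * Real.log t * cp := by
      rw [norm_smul, Real.norm_eq_abs, abs_of_nonneg (by positivity)]
      exact mul_le_mul (mul_le_mul_of_nonneg_right hple hL0) hpb
        (norm_nonneg _) (by positivity)
    have e2 : ‖a₁ x • ((t ^ q x * Real.log t) • fderiv ℝ q x)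
        + (t ^ q x) • fderiv ℝ a₁ x‖
        ≤ A₁ * (t ^ rp * Real.log t * cq) + t ^ rp * ca₁ := by
      refine le_trans (norm_add_le _ _) (add_le_add ?_ ?_)
      · rw [norm_smul, norm_smul, Real.norm_eq_abs, Real.norm_eq_abs,
          abs_of_nonneg h10, abs_of_nonneg (by positivity)]
        exact mul_le_mul h1A (mul_le_mul (mul_le_mul_of_nonneg_right hqle hL0) hqb
          (norm_nonneg _) (by positivity)) (by positivity) hA₁0
      · rw [norm_smul, Real.norm_eq_abs, abs_of_nonneg htq0]
        exact mul_le_mul hqle h1b (norm_nonneg _) htrp0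
    have e3 : ‖a₂ x • ((t ^ r x * Real.log t) • fderiv ℝ r x)
        + (t ^ r x) • fderiv ℝ a₂ x‖
        ≤ A₂ * (t ^ rp * Real.log t * cr) + t ^ rp * ca₂ := by
      refine le_trans (norm_add_le _ _) (add_le_add ?_ ?_)
      · rw [norm_smul, norm_smul, Real.norm_eq_abs, Real.norm_eq_abs,
          abs_of_nonneg h20, abs_of_nonneg (by positivity)]
        exact mul_le_mul h2A (mul_le_mul (mul_le_mul_of_nonneg_right hrle hL0) hrb
          (norm_nonneg _) (by positivity)) (by positivity) hA₂0
      · rw [norm_smul, Real.norm_eq_abs, abs_of_nonneg htr0]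
        exact mul_le_mul hrle h2b (norm_nonneg _) htrp0
    calc ‖F'‖ ≤ ‖(t ^ p x * Real.log t) • fderiv ℝ p x +
          (a₁ x • ((t ^ q x * Real.log t) • fderiv ℝ q x) + (t ^ q x) • fderiv ℝ a₁ x)‖
          + ‖a₂ x • ((t ^ r x * Real.log t) • fderiv ℝ r x) + (t ^ r x) • fderiv ℝ a₂ x‖ := by
            rw [hF'def]; exact norm_add_le _ _
      _ ≤ (‖(t ^ p x * Real.log t) • fderiv ℝ p x‖ +
          ‖a₁ x • ((t ^ q x * Real.log t) • fderiv ℝ q x) + (t ^ q x) • fderiv ℝ a₁ x‖)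
          + ‖a₂ x • ((t ^ r x * Real.log t) • fderiv ℝ r x) + (t ^ r x) • fderiv ℝ a₂ x‖ := by
            gcongr; exact norm_add_le _ _
      _ ≤ (t ^ rp * Real.log t * cp + (A₁ * (t ^ rp * Real.log t * cq) + t ^ rp * ca₁))
          + (A₂ * (t ^ rp * Real.log t * cr) + t ^ rp * ca₂) := by
            exact add_le_add (add_le_add e1 e2) e3
      _ = (cp + A₁ * cq + A₂ * cr) * (t ^ rp * Real.log t)
          + (ca₁ + ca₂) * t ^ rp := by ring
  -- log bound : log t ≤ t ^ ζ / ζ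
  have hlog : Real.log t ≤ t ^ ζ / ζ := by
    have h1 : Real.log (t ^ ζ) ≤ t ^ ζ - 1 :=
      Real.log_le_sub_one_of_pos (Real.rpow_pos_of_pos ht0 _)
    rw [Real.log_rpow ht0] at h1
    rw [le_div_iff₀ hζpos]
    nlinarith
  have htζ0 : (0:ℝ) ≤ t ^ ζ := (Real.rpow_pos_of_pos ht0 _).le
  have hmul : t ^ rp * t ^ ζ = t ^ (rp + ζ) := (Real.rpow_add ht0 _ _).symm
  have hKt : ‖F'‖ ≤ K * t ^ (rp + ζ) := by
    have h1 : (cp + A₁ * cq + A₂ * cr) * (t ^ rp * Real.log t)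
        ≤ (cp + A₁ * cq + A₂ * cr) / ζ * t ^ (rp + ζ) := by
      rw [← hmul]
      have hc0 : 0 ≤ cp + A₁ * cq + A₂ * cr := by positivity
      have : t ^ rp * Real.log t ≤ t ^ rp * (t ^ ζ / ζ) := by
        exact mul_le_mul_of_nonneg_left hlog htrp0
      calc (cp + A₁ * cq + A₂ * cr) * (t ^ rp * Real.log t)
          ≤ (cp + A₁ * cq + A₂ * cr) * (t ^ rp * (t ^ ζ / ζ)) :=
            mul_le_mul_of_nonneg_left this hc0
        _ = (cp + A₁ * cq + A₂ * cr) / ζ * (t ^ rp * t ^ ζ) := by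
            field_simp
    have h2 : (ca₁ + ca₂) * t ^ rp ≤ (ca₁ + ca₂) * t ^ (rp + ζ) := by
      have : t ^ rp ≤ t ^ (rp + ζ) :=
        Real.rpow_le_rpow_of_exponent_le ht (by linarith)
      exact mul_le_mul_of_nonneg_left this (by positivity)
    rw [hKdef]
    calc ‖F'‖ ≤ (cp + A₁ * cq + A₂ * cr) * (t ^ rp * Real.log t)
        + (ca₁ + ca₂) * t ^ rp := hnorm
      _ ≤ (cp + A₁ * cq + A₂ * cr) / ζ * t ^ (rp + ζ)
        + (ca₁ + ca₂) * t ^ (rp + ζ) := add_le_add h1 h2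
      _ = ((cp + A₁ * cq + A₂ * cr) / ζ + ca₁ + ca₂) * t ^ (rp + ζ) := by ring
  -- t ^ (rp + ζ) = (t ^ pm) ^ (1 + δ) ≤ T x t ^ (1 + δ)
  have hexp : rp + ζ = pm * (1 + δ) := by rw [hζdef]; ring
  have hTlb : t ^ pm ≤ T x t := by
    rw [hT x t]
    have h1 : t ^ pm ≤ t ^ p x := Real.rpow_le_rpow_of_exponent_le ht hpx
    nlinarith [mul_nonneg h10 htq0, mul_nonneg h20 htr0]
  have htpm0 : (0:ℝ) ≤ t ^ pm := (Real.rpow_pos_of_pos ht0 _).le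
  have hfinal : t ^ (rp + ζ) ≤ T x t ^ (1 + δ) := by
    rw [hexp, Real.rpow_mul ht0.le]
    exact Real.rpow_le_rpow htpm0 hTlb (by linarith)
  have hT0 : (0:ℝ) ≤ T x t ^ (1 + δ) := by
    have : (0:ℝ) < T x t := lt_of_lt_of_le (Real.rpow_pos_of_pos ht0 pm) hTlb
    positivity
  have hKC : K ≤ max K 1 := le_max_left _ _
  have hK0 : 0 ≤ K := by rw [hKdef]; positivity
  calc ‖F'‖ ≤ K * t ^ (rp + ζ) := hKt
    _ ≤ K * T x t ^ (1 + δ) := mul_le_mul_of_nonneg_left hfinal hK0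
    _ ≤ max K 1 * T x t ^ (1 + δ) := mul_le_mul_of_nonneg_right hKC hT0
end

section
/- Let a, b, A, B, S, m₀, θ, μ, ν, h₁, h₂, b₁, b₂ be positive real numbers with a ≤ b < A ≤ B. Assume that for every β ∈ {a, b} and every h ∈ {A, B} one has h₁ ≤ hβ/(h−β) ≤ h₂ and b₁ ≤ β/(h−β) ≤ b₂. If S · min(ν^{1/A}, ν^{1/B}) ≤ max(μ^{1/a}, μ^{1/b}) and m₀ μ ≤ θ ν, then μ ≥ min(S^{h₁}, S^{h₂}) · min((m₀/θ)^{b₁}, (m₀/θ)^{b₂}). -/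
open Real

/-!
Pick the indices realising the min and the max, so that `S ν^{1/h} ≤ μ^{1/β}` for some
`β ∈ {a, b}`, `h ∈ {A, B}` with `β < h`. Feeding in `ν ≥ (m₀/θ) μ` and dividing by `μ^{1/h}`
leaves `S (m₀/θ)^{1/h} ≤ μ^{1/β - 1/h}`, and raising to the power `E = hβ/(h-β)`, the inverse of
`1/β - 1/h`, gives `S^E (m₀/θ)^{β/(h-β)} ≤ μ`. Finally `x^e ≥ min (x^p) (x^q)` whenever
`p ≤ e ≤ q`, whatever the position of `x > 0` relative to `1`.
-/

lemma min_rpow_le_rpow {x p q e : ℝ} (hx : 0 < x) (hpe : p ≤ e) (heq : e ≤ q) :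
    min (x ^ p) (x ^ q) ≤ x ^ e := by
  rcases le_total 1 x with h | h
  · exact (min_le_left _ _).trans (rpow_le_rpow_of_exponent_le h hpe)
  · exact (min_le_right _ _).trans (rpow_le_rpow_of_exponent_ge hx h heq)

lemma rpow_mul_rpow_le_of_mul_le {β h S c μ ν : ℝ} (hβ : 0 < β) (hβh : β < h) (hS : 0 ≤ S)
    (hc : 0 ≤ c) (hμ : 0 < μ) (hcμ : c * μ ≤ ν) (hSν : S * ν ^ (1 / h) ≤ μ ^ (1 / β)) :
    S ^ (h * β / (h - β)) * c ^ (β / (h - β)) ≤ μ := by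
  have hh : 0 < h := hβ.trans hβh
  have hhβ : 0 < h - β := sub_pos.mpr hβh
  have hμh : 0 < μ ^ (1 / h) := rpow_pos_of_pos hμ _
  have hcμ' : S * c ^ (1 / h) * μ ^ (1 / h) ≤ μ ^ (1 / β) :=
    calc S * c ^ (1 / h) * μ ^ (1 / h) = S * (c * μ) ^ (1 / h) := by
          rw [mul_rpow hc hμ.le, mul_assoc]
      _ ≤ S * ν ^ (1 / h) := by gcongr
      _ ≤ μ ^ (1 / β) := hSν
  have hdiv : S * c ^ (1 / h) ≤ μ ^ (h * β / (h - β))⁻¹ := by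
    have hexp : (h * β / (h - β))⁻¹ = 1 / β - 1 / h := by field_simp
    rwa [hexp, rpow_sub hμ, le_div_iff₀ hμh]
  rw [le_rpow_inv_iff_of_pos (by positivity) hμ.le (by positivity),
    mul_rpow hS (by positivity), ← rpow_mul hc] at hdiv
  convert hdiv using 3
  field_simp

theorem atomic_weight_lower_bound_general (a b A B S m₀ θ μ ν h₁ h₂ b₁ b₂ : ℝ)
    (ha : 0 < a) (hb : 0 < b) (hS : 0 < S)
    (hm₀ : 0 < m₀) (hθ : 0 < θ) (hμ : 0 < μ)
    (hab : a ≤ b) (hbA : b < A) (hAB : A ≤ B)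
    (hrange : ∀ β ∈ ({a, b} : Set ℝ), ∀ h ∈ ({A, B} : Set ℝ),
      h₁ ≤ h * β / (h - β) ∧ h * β / (h - β) ≤ h₂ ∧
      b₁ ≤ β / (h - β) ∧ β / (h - β) ≤ b₂)
    (h1 : S * min (ν ^ (1 / A)) (ν ^ (1 / B)) ≤ max (μ ^ (1 / a)) (μ ^ (1 / b)))
    (h2 : m₀ * μ ≤ θ * ν) :
    min (S ^ h₁) (S ^ h₂) * min ((m₀ / θ) ^ b₁) ((m₀ / θ) ^ b₂) ≤ μ := by
  obtain ⟨h, hh, hmin⟩ : ∃ h ∈ ({A, B} : Set ℝ), min (ν ^ (1 / A)) (ν ^ (1 / B)) = ν ^ (1 / h) := by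
    rcases min_choice (ν ^ (1 / A)) (ν ^ (1 / B)) with e | e
    exacts [⟨A, by simp, e⟩, ⟨B, by simp, e⟩]
  obtain ⟨β, hβ, hmax⟩ : ∃ β ∈ ({a, b} : Set ℝ), max (μ ^ (1 / a)) (μ ^ (1 / b)) = μ ^ (1 / β) := by
    rcases max_choice (μ ^ (1 / a)) (μ ^ (1 / b)) with e | e
    exacts [⟨a, by simp, e⟩, ⟨b, by simp, e⟩]
  have hβpos : 0 < β := by rcases hβ with rfl | rfl <;> assumption
  have hβh : β < h := by
    have : β ≤ b := by
      rcases hβ with rfl | rfl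
      exacts [hab, le_rfl]
    rcases hh with rfl | rfl <;> linarith
  obtain ⟨hE₁, hE₂, hF₁, hF₂⟩ := hrange β hβ h hh
  have hc : 0 < m₀ / θ := div_pos hm₀ hθ
  have hcμ : m₀ / θ * μ ≤ ν := by rwa [div_mul_eq_mul_div, div_le_iff₀ hθ, mul_comm ν]
  calc min (S ^ h₁) (S ^ h₂) * min ((m₀ / θ) ^ b₁) ((m₀ / θ) ^ b₂)
      ≤ S ^ (h * β / (h - β)) * (m₀ / θ) ^ (β / (h - β)) :=
        mul_le_mul (min_rpow_le_rpow hS hE₁ hE₂) (min_rpow_le_rpow hc hF₁ hF₂)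
          (by positivity) (by positivity)
    _ ≤ μ := rpow_mul_rpow_le_of_mul_le hβpos hβh hS.le hc.le hμ hcμ (by rwa [hmin, hmax] at h1)

theorem atomic_weight_lower_bound (a b A B S m₀ θ μ ν h₁ h₂ b₁ b₂ : ℝ)
    (ha : 0 < a) (hb : 0 < b) (hA : 0 < A) (hB : 0 < B) (hS : 0 < S)
    (hm₀ : 0 < m₀) (hθ : 0 < θ) (hμ : 0 < μ) (hν : 0 < ν)
    (hh₁ : 0 < h₁) (hh₂ : 0 < h₂) (hb₁ : 0 < b₁) (hb₂ : 0 < b₂)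
    (hab : a ≤ b) (hbA : b < A) (hAB : A ≤ B)
    (hrange : ∀ β ∈ ({a, b} : Set ℝ), ∀ h ∈ ({A, B} : Set ℝ),
      h₁ ≤ h * β / (h - β) ∧ h * β / (h - β) ≤ h₂ ∧
      b₁ ≤ β / (h - β) ∧ β / (h - β) ≤ b₂)
    (h1 : S * min (ν ^ (1 / A)) (ν ^ (1 / B)) ≤ max (μ ^ (1 / a)) (μ ^ (1 / b)))
    (h2 : m₀ * μ ≤ θ * ν) :
    min (S ^ h₁) (S ^ h₂) * min ((m₀ / θ) ^ b₁) ((m₀ / θ) ^ b₂) ≤ μ :=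
  atomic_weight_lower_bound_general a b A B S m₀ θ μ ν h₁ h₂ b₁ b₂ ha hb hS hm₀ hθ hμ hab hbA hAB
    hrange h1 h2
end
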